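/- Define L^q_{ij} := (Ĥ⁻¹)^{ql} ∂_j Ĥ_{li}, the torsion T^p_{ij} := ½(L^p_{ij} − L^p_{ji}), and on ω the fields H_{αβ} := A_α·a_β, H_{3α} := N·a_α, F_{αβ} := A_α·D_β, F_{3β} := N·D_β, F_{α3} := A_α·d, F_{33} := N·d. Then T^p_{ij}(θ,0) = 0 for all indices p,i,j and all θ ∈ ω if and only if the following hold at every point of ω: (1) ∂_β H_{iα} − ∂_α H_{iβ} = 0 for i ∈ {1,2,3} and α,β ∈ {1,2}; (2) ∂_α F_{μ3} − F_{μα} + B^ν_μ H_{να} = 0 for μ,α ∈ {1,2}; (3) ∂_α F_{33} − F_{3α} = 0 for α ∈ {1,2}. -/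

import Mathlib

open Set
open scoped BigOperators

noncomputable section

/-- Euclidean dot product on ℝ³. -/
def dot3 (u v : Fin 3 → ℝ) : ℝ := ∑ m, u m * v m

/-- Cross product on ℝ³. -/
def cross3 (u v : Fin 3 → ℝ) : Fin 3 → ℝ :=
  ![u 1 * v 2 - u 2 * v 1, u 2 * v 0 - u 0 * v 2, u 0 * v 1 - u 1 * v 0]

/-- Euclidean norm on ℝ³. -/
def norm3 (u : Fin 3 → ℝ) : ℝ := Real.sqrt (dot3 u u)

/-- Partial derivative of a scalar field on ℝ³. -/
def pd3 (k : Fin 3) (f : (Fin 3 → ℝ) → ℝ) (x : Fin 3 → ℝ) : ℝ :=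
  fderiv ℝ f x (Pi.single k 1)

/-- Partial derivative of a vector field on ℝ³. -/
def vpd3 (k : Fin 3) (f : (Fin 3 → ℝ) → (Fin 3 → ℝ)) (x : Fin 3 → ℝ) : Fin 3 → ℝ :=
  fderiv ℝ f x (Pi.single k 1)

/-- Partial derivative of a scalar field on ℝ². -/
def pd2 (α : Fin 2) (f : (Fin 2 → ℝ) → ℝ) (θ : Fin 2 → ℝ) : ℝ :=
  fderiv ℝ f θ (Pi.single α 1)

/-- Partial derivative of a vector field on ℝ². -/
def vpd2 (α : Fin 2) (f : (Fin 2 → ℝ) → (Fin 3 → ℝ)) (θ : Fin 2 → ℝ) : Fin 3 → ℝ :=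
  fderiv ℝ f θ (Pi.single α 1)

/-- The surface coordinates of a point of Ω ⊆ ℝ³. -/
def θof (x : Fin 3 → ℝ) : Fin 2 → ℝ := ![x 0, x 1]

/-- Embedding of (θ, ζ) as a point of ℝ³. -/
def emb (θ : Fin 2 → ℝ) (ζ : ℝ) : Fin 3 → ℝ := ![θ 0, θ 1, ζ]

/-!
Since `g_i = Ĥ_{ki} G^k` and `(G^k)` is the dual frame of `(G_l)`, the material field is
`Ĥ_{li} = G_l · g_i`, with `G_α = A_α + ζ ∂_α N` and `G_3 = N` on the shell. As `Ĥ(θ,0)` is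
invertible, the torsion vanishes at `(θ,0)` iff `∂_j Ĥ_{li} = ∂_i Ĥ_{lj}` there. At `ζ = 0` the
tangential derivatives of `Ĥ_{iα}` and `Ĥ_{i3}` are those of `H_{iα}` and `F_{i3}`, while the normal
derivatives are `∂_ζ Ĥ_{μα} = ∂_μ N · a_α + A_μ · D_α = F_{μα} - B^ν_μ H_{να}` (Weingarten formula
`∂_μ N = -B^ν_μ A_ν`) and `∂_ζ Ĥ_{3α} = N · D_α = F_{3α}`. The symmetry conditions for
`(i,j) = (α,β)` and for `(i,j) = (α,3)` with `l = μ` resp. `l = 3` are then (1), (2) and (3).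
-/

open Matrix Filter Topology

theorem dot3_eq_dotProduct (u v : Fin 3 → ℝ) : dot3 u v = u ⬝ᵥ v := rfl

theorem cross3_eq_crossProduct (u v : Fin 3 → ℝ) : cross3 u v = u ⨯₃ v := rfl

theorem θof_emb (θ : Fin 2 → ℝ) (ζ : ℝ) : θof (emb θ ζ) = θ := by
  ext α; fin_cases α <;> rfl

theorem emb_two (θ : Fin 2 → ℝ) (ζ : ℝ) : emb θ ζ 2 = ζ := rfl

section LinearAlgebra

variable {ι n : Type*} [Fintype ι] [DecidableEq ι] [Fintype n]

theorem det_gram_ne_zero_of_linearIndependent {v : ι → n → ℝ} (hv : LinearIndependent ℝ v) :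
    (of fun i j => v i ⬝ᵥ v j).det ≠ 0 := by
  have hgram : (of fun i j => v i ⬝ᵥ v j) = gram ℝ fun i => WithLp.toLp 2 (v i) := by
    ext i j
    simp [gram, EuclideanSpace.inner_toLp_toLp, dotProduct_comm]
  rw [hgram, det_gram_ne_zero_iff_linearIndependent]
  exact hv.map' (WithLp.linearEquiv 2 ℝ (n → ℝ)).symm.toLinearMap (LinearEquiv.ker _)

theorem dotProduct_sum_smul_dualFrame {v : ι → n → ℝ} (hG : (of fun i j => v i ⬝ᵥ v j).det ≠ 0)
    (H : ι → ι → ℝ) (l i : ι) :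
    v l ⬝ᵥ ∑ p, H p i • ∑ k, (of fun i j => v i ⬝ᵥ v j)⁻¹ p k • v k = H l i := by
  set G := of fun i j => v i ⬝ᵥ v j
  have hdual : ∀ p, v l ⬝ᵥ ∑ k, G⁻¹ p k • v k = (G⁻¹ * G) p l := fun p => by
    simp only [dotProduct_comm (v l), sum_dotProduct, smul_dotProduct, smul_eq_mul, mul_apply,
      G, of_apply]
  simp only [dotProduct_sum, dotProduct_smul, hdual, nonsing_inv_mul G (Ne.isUnit hG),
    one_apply, smul_eq_mul, mul_ite, mul_one, mul_zero, Finset.sum_ite_eq', Finset.mem_univ,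
    if_true]

theorem eq_sum_gram_inv_of_mem_span {v : ι → n → ℝ} (hG : (of fun i j => v i ⬝ᵥ v j).det ≠ 0)
    {w : n → ℝ} (hw : w ∈ Submodule.span ℝ (Set.range v)) :
    w = ∑ ν, (∑ ρ, (of fun i j => v i ⬝ᵥ v j)⁻¹ ν ρ * (w ⬝ᵥ v ρ)) • v ν := by
  obtain ⟨c, rfl⟩ := Submodule.mem_span_range_iff_exists_fun ℝ |>.mp hw
  set G := of fun i j => v i ⬝ᵥ v j
  have hcoord : (fun ρ => (∑ ν, c ν • v ν) ⬝ᵥ v ρ) = G *ᵥ c := by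
    ext ρ
    simp only [sum_dotProduct, smul_dotProduct, smul_eq_mul, mulVec, G, of_apply]
    simp only [dotProduct, mul_comm]
  have hc : G⁻¹ *ᵥ (fun ρ => (∑ ν, c ν • v ν) ⬝ᵥ v ρ) = c := by
    rw [hcoord, mulVec_mulVec, nonsing_inv_mul G (Ne.isUnit hG), one_mulVec]
  exact congr_arg (fun c => ∑ ν, c ν • v ν) hc.symm

theorem sum_inv_mul_skew_eq_zero_iff {M : Matrix ι ι ℝ} (hM : M.det ≠ 0) (S : ι → ι → ι → ℝ) :
    (∀ p i j, (∑ l, M⁻¹ p l * S l i j - ∑ l, M⁻¹ p l * S l j i) / 2 = 0) ↔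
      ∀ l i j, S l i j = S l j i := by
  have hinj : Function.Injective (M⁻¹ *ᵥ ·) := mulVec_injective_iff_isUnit.mpr
    (isUnit_nonsing_inv_iff.mpr ((isUnit_iff_isUnit_det M).mpr (Ne.isUnit hM)))
  refine ⟨fun h l i j => ?_, fun h p i j => by simp only [h _ i j, sub_self, zero_div]⟩
  refine congr_fun (hinj (a₁ := fun l => S l i j) (a₂ := fun l => S l j i) ?_) l
  ext p
  simpa [mulVec, dotProduct, sub_eq_zero] using h p i j

end LinearAlgebra

theorem Fin.forall_symm_iff_castSucc_last {α : Type*} {n : ℕ} (S : Fin (n + 1) → Fin (n + 1) → α) :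
    (∀ i j, S i j = S j i) ↔
      (∀ μ ν : Fin n, S μ.castSucc ν.castSucc = S ν.castSucc μ.castSucc) ∧
        ∀ μ : Fin n, S μ.castSucc (Fin.last n) = S (Fin.last n) μ.castSucc := by
  refine ⟨fun h => ⟨fun μ ν => h _ _, fun μ => h _ _⟩, fun ⟨h, hl⟩ i j => ?_⟩
  induction i using Fin.lastCases <;> induction j using Fin.lastCases
  exacts [rfl, (hl _).symm, hl _, h _ _]

section CrossProduct

theorem cross3_ne_zero {v : Fin 2 → Fin 3 → ℝ} (hv : LinearIndependent ℝ v) :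
    cross3 (v 0) (v 1) ≠ 0 := by
  rw [cross3_eq_crossProduct, crossProduct_ne_zero_iff_linearIndependent]
  rwa [show ![v 0, v 1] = v from by ext i; fin_cases i <;> rfl]

theorem mem_span_of_dotProduct_cross_eq_zero {v : Fin 2 → Fin 3 → ℝ} (hv : LinearIndependent ℝ v)
    {w : Fin 3 → ℝ} (hw : w ⬝ᵥ (v 0 ⨯₃ v 1) = 0) : w ∈ Submodule.span ℝ (Set.range v) := by
  have hc : (v 0 ⨯₃ v 1) ⬝ᵥ (v 0 ⨯₃ v 1) ≠ 0 := dotProduct_self_eq_zero.not.mpr (cross3_ne_zero hv)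
  -- for `c = v 0 ⨯₃ v 1`: `c ⨯₃ (w ⨯₃ c) = (c ⬝ᵥ c) • w` as `w ⊥ c`, and `c ⨯₃ u ∈ span (range v)`
  have hdecomp : ((v 0 ⨯₃ v 1) ⬝ᵥ (v 0 ⨯₃ v 1)) • w =
      (v 0 ⬝ᵥ (w ⨯₃ (v 0 ⨯₃ v 1))) • v 1 - (v 1 ⬝ᵥ (w ⨯₃ (v 0 ⨯₃ v 1))) • v 0 := by
    rw [← cross_cross_eq_smul_sub_smul, cross_cross_eq_smul_sub_smul', hw, zero_smul, sub_zero]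
  rw [← inv_smul_smul₀ hc w, hdecomp]
  refine Submodule.smul_mem _ _ (Submodule.sub_mem _ ?_ ?_) <;>
    exact Submodule.smul_mem _ _ (Submodule.subset_span ⟨_, rfl⟩)

theorem norm3_mul_self (u : Fin 3 → ℝ) : norm3 u * norm3 u = u ⬝ᵥ u :=
  Real.mul_self_sqrt (by rw [dot3_eq_dotProduct]; simpa using dotProduct_star_self_nonneg u)

theorem norm3_pos {u : Fin 3 → ℝ} (hu : u ≠ 0) : 0 < norm3 u :=
  Real.sqrt_pos.mpr (by rw [dot3_eq_dotProduct]; simpa using dotProduct_star_self_pos_iff.mpr hu)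

theorem inv_norm3_smul_dotProduct_self {u : Fin 3 → ℝ} (hu : u ≠ 0) :
    ((norm3 u)⁻¹ • u) ⬝ᵥ ((norm3 u)⁻¹ • u) = 1 := by
  have h := (norm3_pos hu).ne'
  rw [smul_dotProduct, dotProduct_smul, smul_eq_mul, smul_eq_mul, ← norm3_mul_self]
  field_simp

theorem cross3_dotProduct (v : Fin 2 → Fin 3 → ℝ) (α : Fin 2) :
    cross3 (v 0) (v 1) ⬝ᵥ v α = 0 := by
  rw [cross3_eq_crossProduct, dotProduct_comm]
  fin_cases α
  exacts [dot_self_cross _ _, dot_cross_self _ _]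

end CrossProduct

section Calculus

variable {E : Type*} [NormedAddCommGroup E] [NormedSpace ℝ E] {n : Type*} [Fintype n]

theorem fderiv_dotProduct_apply {f g : E → n → ℝ} {x : E} (hf : DifferentiableAt ℝ f x)
    (hg : DifferentiableAt ℝ g x) (v : E) :
    fderiv ℝ (fun t => f t ⬝ᵥ g t) x v = fderiv ℝ f x v ⬝ᵥ g x + f x ⬝ᵥ fderiv ℝ g x v := by
  have hcoord := fun (h : E → n → ℝ) (hh : DifferentiableAt ℝ h x) i =>
    hasFDerivAt_pi'.mp hh.hasFDerivAt i
  have h : HasFDerivAt (fun t => ∑ i, f t i * g t i) _ x :=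
    HasFDerivAt.fun_sum fun i _ => (hcoord f hf i).fun_mul (hcoord g hg i)
  rw [show (fun t => f t ⬝ᵥ g t) = fun t => ∑ i, f t i * g t i from rfl, h.fderiv]
  simp [dotProduct, Finset.sum_add_distrib, mul_comm, add_comm]

theorem fderiv_dotProduct_add_eq_zero {f g : E → n → ℝ} {x : E} {c : ℝ}
    (hf : DifferentiableAt ℝ f x) (hg : DifferentiableAt ℝ g x)
    (hc : ∀ᶠ t in 𝓝 x, f t ⬝ᵥ g t = c) (v : E) :
    fderiv ℝ f x v ⬝ᵥ g x + f x ⬝ᵥ fderiv ℝ g x v = 0 := by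
  rw [← fderiv_dotProduct_apply hf hg, EventuallyEq.fderiv_eq hc]
  simp

theorem DifferentiableAt.crossProduct {f g : E → Fin 3 → ℝ} {x : E} (hf : DifferentiableAt ℝ f x)
    (hg : DifferentiableAt ℝ g x) : DifferentiableAt ℝ (fun t => f t ⨯₃ g t) x := by
  refine differentiableAt_pi.mpr fun i => ?_
  fin_cases i <;> simp [cross_apply] <;> fun_prop

theorem linearIndependent_fderiv_single {ι : Type*} [Fintype ι] [DecidableEq ι] {F : Type*}
    [NormedAddCommGroup F] [NormedSpace ℝ F] {f : (ι → ℝ) → F} {x : ι → ℝ}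
    (hf : Function.Injective (fderiv ℝ f x)) :
    LinearIndependent ℝ fun k => fderiv ℝ f x (Pi.single k 1) := by
  simpa [Function.comp_def] using (Pi.basisFun ℝ ι).linearIndependent.map'
    (fderiv ℝ f x).toLinearMap (LinearMap.ker_eq_bot.mpr hf)

end Calculus

theorem hasDerivAt_affine_dotProduct {n : Type*} [Fintype n] (u u' v v' : n → ℝ) :
    HasDerivAt (fun t : ℝ => (u + t • u') ⬝ᵥ (v + t • v')) (u' ⬝ᵥ v + u ⬝ᵥ v') 0 := by
  have hpoly : (fun t : ℝ => (u + t • u') ⬝ᵥ (v + t • v')) =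
      fun t => u ⬝ᵥ v + t * (u' ⬝ᵥ v + u ⬝ᵥ v') + t ^ 2 * (u' ⬝ᵥ v') := by
    ext t
    simp only [add_dotProduct, dotProduct_add, smul_dotProduct, dotProduct_smul, smul_eq_mul]
    ring
  rw [hpoly]
  simpa using (((hasDerivAt_id 0).mul_const (u' ⬝ᵥ v + u ⬝ᵥ v')).const_add (u ⬝ᵥ v)).fun_add
    ((hasDerivAt_pow 2 (0 : ℝ)).mul_const (u' ⬝ᵥ v'))

theorem hasFDerivAt_θof (x : Fin 3 → ℝ) :
    HasFDerivAt θof (ContinuousLinearMap.pi fun α : Fin 2 =>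
      (ContinuousLinearMap.proj α.castSucc : (Fin 3 → ℝ) →L[ℝ] ℝ)) x := by
  convert (ContinuousLinearMap.pi fun α : Fin 2 =>
    (ContinuousLinearMap.proj α.castSucc : (Fin 3 → ℝ) →L[ℝ] ℝ)).hasFDerivAt using 1
  ext x' α
  fin_cases α <;> rfl

theorem hasFDerivAt_emb_zero (θ : Fin 2 → ℝ) :
    HasFDerivAt (fun θ' => emb θ' 0)
      (ContinuousLinearMap.pi ![.proj 0, .proj 1, 0] : (Fin 2 → ℝ) →L[ℝ] Fin 3 → ℝ) θ := by
  convert (ContinuousLinearMap.pi ![.proj 0, .proj 1, 0] :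
    (Fin 2 → ℝ) →L[ℝ] Fin 3 → ℝ).hasFDerivAt using 1
  ext θ' k
  fin_cases k <;> rfl

theorem hasDerivAt_emb (θ : Fin 2 → ℝ) (ζ : ℝ) :
    HasDerivAt (emb θ) (Pi.single 2 1) ζ := by
  refine hasDerivAt_pi.mpr fun k => ?_
  fin_cases k
  exacts [hasDerivAt_const _ _, hasDerivAt_const _ _, hasDerivAt_id _]

theorem pd2_eq_pd3_castSucc {f : (Fin 3 → ℝ) → ℝ} {g : (Fin 2 → ℝ) → ℝ} {θ : Fin 2 → ℝ}
    (hf : DifferentiableAt ℝ f (emb θ 0)) (hg : g =ᶠ[𝓝 θ] fun θ' => f (emb θ' 0)) (β : Fin 2) :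
    pd2 β g θ = pd3 β.castSucc f (emb θ 0) := by
  rw [pd2, pd3,
    ((hf.hasFDerivAt.comp θ (hasFDerivAt_emb_zero θ)).congr_of_eventuallyEq hg).fderiv]
  have hdir : (ContinuousLinearMap.pi ![.proj 0, .proj 1, 0] : (Fin 2 → ℝ) →L[ℝ] Fin 3 → ℝ)
      (Pi.single β 1) = Pi.single β.castSucc 1 := by
    ext k; fin_cases β <;> fin_cases k <;> rfl
  rw [ContinuousLinearMap.comp_apply, hdir]

theorem pd3_two_eq_of_hasDerivAt {f : (Fin 3 → ℝ) → ℝ} {θ : Fin 2 → ℝ} {c : ℝ}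
    (hf : DifferentiableAt ℝ f (emb θ 0)) (h : HasDerivAt (fun ζ => f (emb θ ζ)) c 0) :
    pd3 2 f (emb θ 0) = c :=
  (hf.hasFDerivAt.comp_hasDerivAt 0 (hasDerivAt_emb θ 0)).unique h

theorem vpd2_vpd2_comm {R : (Fin 2 → ℝ) → Fin 3 → ℝ} {θ : Fin 2 → ℝ} (hR : ContDiffAt ℝ 2 R θ)
    (α β : Fin 2) : vpd2 β (vpd2 α R) θ = vpd2 α (vpd2 β R) θ := by
  have hR' : DifferentiableAt ℝ (fderiv ℝ R) θ :=
    (hR.fderiv_right (m := 1) le_rfl).differentiableAt one_ne_zero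
  have key : ∀ γ δ : Fin 2,
      vpd2 δ (vpd2 γ R) θ = fderiv ℝ (fderiv ℝ R) θ (Pi.single δ 1) (Pi.single γ 1) := by
    intro γ δ
    rw [vpd2, show vpd2 γ R = fun θ' => fderiv ℝ R θ' (Pi.single γ 1) from rfl,
      fderiv_clm_apply hR' (differentiableAt_const _)]
    simp
  rw [key, key]
  exact hR.isSymmSndFDerivAt (by simp) _ _
section MidSurface

variable {ω : Set (Fin 2 → ℝ)} {R N : (Fin 2 → ℝ) → Fin 3 → ℝ}
  {A : Fin 2 → (Fin 2 → ℝ) → Fin 3 → ℝ} {θ : Fin 2 → ℝ}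

theorem linearIndependent_tangent (hRimm : Function.Injective (fderiv ℝ R θ))
    (hA : ∀ α θ, A α θ = vpd2 α R θ) : LinearIndependent ℝ fun α => A α θ := by
  simp only [hA]
  exact linearIndependent_fderiv_single hRimm

theorem normal_dotProduct_self (hRimm : Function.Injective (fderiv ℝ R θ))
    (hA : ∀ α θ, A α θ = vpd2 α R θ)
    (hN : N θ = (norm3 (cross3 (A 0 θ) (A 1 θ)))⁻¹ • cross3 (A 0 θ) (A 1 θ)) :
    N θ ⬝ᵥ N θ = 1 := by
  rw [hN]
  exact inv_norm3_smul_dotProduct_self (cross3_ne_zero (linearIndependent_tangent hRimm hA))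

theorem normal_dotProduct_tangent
    (hN : N θ = (norm3 (cross3 (A 0 θ) (A 1 θ)))⁻¹ • cross3 (A 0 θ) (A 1 θ)) (α : Fin 2) :
    N θ ⬝ᵥ A α θ = 0 := by
  rw [hN, smul_dotProduct, cross3_dotProduct (fun α => A α θ) α, smul_zero]

theorem contDiffOn_vpd2 {m n : WithTop ℕ∞} (hωo : IsOpen ω) (hRs : ContDiffOn ℝ n R ω)
    (hmn : m + 1 ≤ n) (α : Fin 2) : ContDiffOn ℝ m (vpd2 α R) ω :=
  (hRs.fderiv_of_isOpen hωo hmn).clm_apply contDiffOn_const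

theorem differentiableAt_tangent (hωo : IsOpen ω) (hRs : ContDiffOn ℝ (⊤ : ℕ∞) R ω)
    (hA : ∀ α θ, A α θ = vpd2 α R θ) (hθ : θ ∈ ω) (α : Fin 2) : DifferentiableAt ℝ (A α) θ := by
  rw [show A α = vpd2 α R from funext (hA α)]
  exact ((contDiffOn_vpd2 (m := 1) hωo hRs (WithTop.coe_le_coe.mpr le_top) α).differentiableOn
    one_ne_zero).differentiableAt (hωo.mem_nhds hθ)

theorem differentiableAt_normal (hωo : IsOpen ω) (hRs : ContDiffOn ℝ (⊤ : ℕ∞) R ω)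
    (hRimm : ∀ θ ∈ ω, Function.Injective (fderiv ℝ R θ)) (hA : ∀ α θ, A α θ = vpd2 α R θ)
    (hN : ∀ θ, N θ = (norm3 (cross3 (A 0 θ) (A 1 θ)))⁻¹ • cross3 (A 0 θ) (A 1 θ))
    (hθ : θ ∈ ω) : DifferentiableAt ℝ N θ := by
  have hAd := differentiableAt_tangent hωo hRs hA hθ
  have hc := cross3_ne_zero (linearIndependent_tangent (hRimm θ hθ) hA)
  have hcd : DifferentiableAt ℝ (fun t => cross3 (A 0 t) (A 1 t)) θ :=
    (hAd 0).crossProduct (hAd 1)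
  have hnd : DifferentiableAt ℝ (fun t => norm3 (cross3 (A 0 t) (A 1 t))) θ := by
    refine DifferentiableAt.sqrt (by simp only [dot3]; fun_prop) ?_
    exact (Real.sqrt_pos.mp (norm3_pos hc)).ne'
  rw [show N = _ from funext hN]
  exact (hnd.fun_inv (norm3_pos hc).ne').fun_smul hcd

theorem vpd2_normal_dotProduct_tangent_comm (hωo : IsOpen ω)
    (hRs : ContDiffOn ℝ (⊤ : ℕ∞) R ω) (hRimm : ∀ θ ∈ ω, Function.Injective (fderiv ℝ R θ))
    (hA : ∀ α θ, A α θ = vpd2 α R θ)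
    (hN : ∀ θ, N θ = (norm3 (cross3 (A 0 θ) (A 1 θ)))⁻¹ • cross3 (A 0 θ) (A 1 θ))
    (hθ : θ ∈ ω) (μ ρ : Fin 2) : vpd2 μ N θ ⬝ᵥ A ρ θ = vpd2 ρ N θ ⬝ᵥ A μ θ := by
  have hsecond : ∀ μ ρ, vpd2 μ N θ ⬝ᵥ A ρ θ = -(N θ ⬝ᵥ vpd2 μ (vpd2 ρ R) θ) := fun μ ρ => by
    have h := fderiv_dotProduct_add_eq_zero (differentiableAt_normal hωo hRs hRimm hA hN hθ)
      (differentiableAt_tangent hωo hRs hA hθ ρ)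
      (Eventually.of_forall fun t => normal_dotProduct_tangent (hN t) ρ) (Pi.single μ 1)
    rw [show A ρ = vpd2 ρ R from funext (hA ρ)] at h ⊢
    exact eq_neg_of_add_eq_zero_left h
  have hR2 : ContDiffAt ℝ 2 R θ :=
    (hRs.contDiffAt (hωo.mem_nhds hθ)).of_le (WithTop.coe_le_coe.mpr le_top)
  rw [hsecond, hsecond, vpd2_vpd2_comm hR2]

theorem vpd2_normal_eq (hωo : IsOpen ω)
    (hRs : ContDiffOn ℝ (⊤ : ℕ∞) R ω) (hRimm : ∀ θ ∈ ω, Function.Injective (fderiv ℝ R θ))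
    (hA : ∀ α θ, A α θ = vpd2 α R θ)
    (hN : ∀ θ, N θ = (norm3 (cross3 (A 0 θ) (A 1 θ)))⁻¹ • cross3 (A 0 θ) (A 1 θ))
    {Bf : Fin 2 → Fin 2 → (Fin 2 → ℝ) → ℝ} (hBf : ∀ α β θ, Bf α β θ = -(dot3 (vpd2 β N θ) (A α θ)))
    {Bup : Fin 2 → Fin 2 → (Fin 2 → ℝ) → ℝ}
    (hBup : ∀ β α θ, Bup β α θ =
      ∑ γ, (Matrix.of fun μ ν : Fin 2 => dot3 (A μ θ) (A ν θ))⁻¹ β γ * Bf α γ θ)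
    (hθ : θ ∈ ω) (μ : Fin 2) : vpd2 μ N θ = -∑ ν, Bup ν μ θ • A ν θ := by
  simp only [dot3_eq_dotProduct] at hBf hBup
  have hv := linearIndependent_tangent (hRimm θ hθ) hA
  have hNd := differentiableAt_normal hωo hRs hRimm hA hN hθ
  have horth : vpd2 μ N θ ⬝ᵥ N θ = 0 := by
    have h := fderiv_dotProduct_add_eq_zero hNd hNd (eventually_of_mem (hωo.mem_nhds hθ)
      fun t ht => normal_dotProduct_self (hRimm t ht) hA (hN t)) (Pi.single μ 1)
    rw [dotProduct_comm (N θ)] at h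
    rw [vpd2]
    linarith
  have hspan : vpd2 μ N θ ∈ Submodule.span ℝ (Set.range fun α => A α θ) := by
    refine mem_span_of_dotProduct_cross_eq_zero hv ?_
    rw [hN, dotProduct_smul, smul_eq_mul] at horth
    exact (mul_eq_zero.mp horth).resolve_left (inv_ne_zero (norm3_pos (cross3_ne_zero hv)).ne')
  rw [eq_sum_gram_inv_of_mem_span (det_gram_ne_zero_of_linearIndependent hv) hspan,
    ← Finset.sum_neg_distrib]
  refine Finset.sum_congr rfl fun ν _ => ?_
  simp only [← neg_smul, hBup, hBf, mul_neg, Finset.sum_neg_distrib, neg_neg,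
    vpd2_normal_dotProduct_tangent_comm hωo hRs hRimm hA hN hθ μ]

end MidSurface

theorem vpd3_shell {R N : (Fin 2 → ℝ) → Fin 3 → ℝ} {X : (Fin 3 → ℝ) → Fin 3 → ℝ}
    (hX : ∀ x, X x = R (θof x) + x 2 • N (θof x)) {θ : Fin 2 → ℝ}
    (hR : DifferentiableAt ℝ R θ) (hN : DifferentiableAt ℝ N θ) (ζ : ℝ) :
    (∀ α : Fin 2, vpd3 α.castSucc X (emb θ ζ) = vpd2 α R θ + ζ • vpd2 α N θ) ∧
      vpd3 2 X (emb θ ζ) = N θ := by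
  rw [← θof_emb θ ζ] at hR hN
  have h := ((hR.hasFDerivAt.comp _ (hasFDerivAt_θof _)).add
      ((hasFDerivAt_apply (𝕜 := ℝ) (2 : Fin 3) _).smul
        (hN.hasFDerivAt.comp _ (hasFDerivAt_θof _)))).congr_of_eventuallyEq
    (Eventually.of_forall hX)
  refine ⟨fun α => ?_, ?_⟩ <;> rw [vpd3, h.fderiv]
  · have hα : (fun i : Fin 2 => (Pi.single α.castSucc 1 : Fin 3 → ℝ) i.castSucc) = Pi.single α 1 :=
      funext fun i => by fin_cases α <;> fin_cases i <;> simp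
    have h2 : (Pi.single α.castSucc 1 : Fin 3 → ℝ) 2 = 0 := by fin_cases α <;> simp
    simp only [θof_emb, Function.comp_apply, _root_.add_apply, ContinuousLinearMap.comp_apply,
      ContinuousLinearMap.coe_pi', ContinuousLinearMap.proj_apply, hα, _root_.smul_apply,
      ContinuousLinearMap.smulRight_apply, h2, zero_smul, add_zero]
    rfl
  · have h2 : (fun i : Fin 2 => (Pi.single 2 1 : Fin 3 → ℝ) i.castSucc) = 0 :=
      funext fun i => by fin_cases i <;> simp
    simp only [θof_emb, Function.comp_apply, _root_.add_apply, ContinuousLinearMap.comp_apply,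
      ContinuousLinearMap.coe_pi', ContinuousLinearMap.proj_apply, h2, map_zero, _root_.smul_apply,
      smul_zero, ContinuousLinearMap.smulRight_apply, Pi.single_eq_same, one_smul, zero_add]

theorem eq_vpd3_dotProduct_of_dualFrame {X : (Fin 3 → ℝ) → Fin 3 → ℝ} {x : Fin 3 → ℝ}
    (hX : Function.Injective (fderiv ℝ X x)) {H g : Fin 3 → Fin 3 → ℝ}
    (hg : ∀ j, g j = ∑ i, H i j •
      (∑ k, (Matrix.of fun p q => dot3 (vpd3 p X x) (vpd3 q X x))⁻¹ i k • vpd3 k X x))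
    (l i : Fin 3) : H l i = vpd3 l X x ⬝ᵥ g i := by
  have hG : LinearIndependent ℝ fun k => vpd3 k X x := linearIndependent_fderiv_single hX
  simp only [dot3_eq_dotProduct] at hg
  rw [hg]
  exact (dotProduct_sum_smul_dualFrame (det_gram_ne_zero_of_linearIndependent hG) H l i).symm

theorem isOpen_shell {ω : Set (Fin 2 → ℝ)} (hωo : IsOpen ω) (ht : ℝ) :
    IsOpen {x : Fin 3 → ℝ | θof x ∈ ω ∧ x 2 ∈ Ioo (-ht) ht} :=
  (hωo.preimage (by unfold θof; fun_prop)).inter (isOpen_Ioo.preimage (continuous_apply 2))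

theorem Hh_emb_eq {ω : Set (Fin 2 → ℝ)} {ht : ℝ} {R N : (Fin 2 → ℝ) → Fin 3 → ℝ}
    {A : Fin 2 → (Fin 2 → ℝ) → Fin 3 → ℝ} {X : (Fin 3 → ℝ) → Fin 3 → ℝ}
    {Hh : Fin 3 → Fin 3 → (Fin 3 → ℝ) → ℝ} {gv : Fin 3 → (Fin 3 → ℝ) → Fin 3 → ℝ}
    {a D : Fin 2 → (Fin 2 → ℝ) → Fin 3 → ℝ} {d : (Fin 2 → ℝ) → Fin 3 → ℝ}
    (hωo : IsOpen ω) (hRs : ContDiffOn ℝ (⊤ : ℕ∞) R ω)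
    (hRimm : ∀ θ ∈ ω, Function.Injective (fderiv ℝ R θ)) (hA : ∀ α θ, A α θ = vpd2 α R θ)
    (hN : ∀ θ, N θ = (norm3 (cross3 (A 0 θ) (A 1 θ)))⁻¹ • cross3 (A 0 θ) (A 1 θ))
    (hX : ∀ x, X x = R (θof x) + x 2 • N (θof x))
    (hXdiff : ∀ x, θof x ∈ ω → x 2 ∈ Ioo (-ht) ht → Function.Bijective (fderiv ℝ X x))
    (hgv : ∀ j x, gv j x = ∑ i, Hh i j x •
      (∑ k, (Matrix.of fun p q => dot3 (vpd3 p X x) (vpd3 q X x))⁻¹ i k • vpd3 k X x))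
    (hstruct : ∀ x, θof x ∈ ω → x 2 ∈ Ioo (-ht) ht →
      (∀ α : Fin 2, gv α.castSucc x = a α (θof x) + x 2 • D α (θof x)) ∧
      gv 2 x = d (θof x))
    {θ : Fin 2 → ℝ} (hθ : θ ∈ ω) {ζ : ℝ} (hζ : ζ ∈ Ioo (-ht) ht) :
    (∀ μ α : Fin 2, Hh μ.castSucc α.castSucc (emb θ ζ) =
      (A μ θ + ζ • vpd2 μ N θ) ⬝ᵥ (a α θ + ζ • D α θ)) ∧
    (∀ α : Fin 2, Hh 2 α.castSucc (emb θ ζ) = N θ ⬝ᵥ (a α θ + ζ • D α θ)) ∧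
    (∀ μ : Fin 2, Hh μ.castSucc 2 (emb θ ζ) = (A μ θ + ζ • vpd2 μ N θ) ⬝ᵥ d θ) ∧
    Hh 2 2 (emb θ ζ) = N θ ⬝ᵥ d θ := by
  have hθ' : θof (emb θ ζ) ∈ ω := (θof_emb θ ζ).symm ▸ hθ
  have hframe : ∀ l i, Hh l i (emb θ ζ) = vpd3 l X (emb θ ζ) ⬝ᵥ gv i (emb θ ζ) :=
    eq_vpd3_dotProduct_of_dualFrame (hXdiff _ hθ' hζ).injective
      (H := fun p q => Hh p q (emb θ ζ)) fun j => hgv j _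
  obtain ⟨hGα, hG3⟩ := vpd3_shell hX
    ((hRs.differentiableOn (by simp)).differentiableAt (hωo.mem_nhds hθ))
    (differentiableAt_normal hωo hRs hRimm hA hN hθ) ζ
  obtain ⟨hgα, hg3⟩ := hstruct _ hθ' hζ
  simp only [θof_emb, emb_two] at hgα hg3
  simp only [hframe, hGα, hG3, hgα, hg3, hA, implies_true, and_self]

theorem stmt5_general
    (ω : Set (Fin 2 → ℝ)) (hωo : IsOpen ω)
    (ht : ℝ) (hht : 0 < ht)
    -- mid-surface parametrization, tangents, normal and curvature
    (R : (Fin 2 → ℝ) → Fin 3 → ℝ)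
    (hRs : ContDiffOn ℝ (⊤ : ℕ∞) R ω)
    (hRimm : ∀ θ ∈ ω, Function.Injective (fderiv ℝ R θ))
    (A : Fin 2 → (Fin 2 → ℝ) → Fin 3 → ℝ) (hA : ∀ α θ, A α θ = vpd2 α R θ)
    (N : (Fin 2 → ℝ) → Fin 3 → ℝ)
    (hN : ∀ θ, N θ = (norm3 (cross3 (A 0 θ) (A 1 θ)))⁻¹ • cross3 (A 0 θ) (A 1 θ))
    (Bf : Fin 2 → Fin 2 → (Fin 2 → ℝ) → ℝ)
    (hBf : ∀ α β θ, Bf α β θ = -(dot3 (vpd2 β N θ) (A α θ)))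
    -- B^β_α := A^{βγ} B_{αγ}
    (Bup : Fin 2 → Fin 2 → (Fin 2 → ℝ) → ℝ)
    (hBup : ∀ β α θ, Bup β α θ =
      ∑ γ, (Matrix.of fun μ ν : Fin 2 => dot3 (A μ θ) (A ν θ))⁻¹ β γ * Bf α γ θ)
    -- the 3-d parametrization X(θ,ζ) = R(θ) + ζ N(θ), a diffeomorphism onto its image
    (X : (Fin 3 → ℝ) → Fin 3 → ℝ)
    (hX : ∀ x, X x = R (θof x) + x 2 • N (θof x))
    (hXdiff : ∀ x, θof x ∈ ω → x 2 ∈ Ioo (-ht) ht → Function.Bijective (fderiv ℝ X x))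
    -- the material uniformity field Ĥ, smooth and invertible on Ω
    (Hh : Fin 3 → Fin 3 → (Fin 3 → ℝ) → ℝ)
    (hHs : ∀ i j, ContDiffOn ℝ (⊤ : ℕ∞) (Hh i j) {x | θof x ∈ ω ∧ x 2 ∈ Ioo (-ht) ht})
    (hHinv : ∀ x, θof x ∈ ω → x 2 ∈ Ioo (-ht) ht →
      (Matrix.of fun i j => Hh i j x).det ≠ 0)
    -- the frame g_j := Ĥ_{ij} G^i, where G^i := G^{ij} G_j and G_i := ∂_i X
    (gv : Fin 3 → (Fin 3 → ℝ) → Fin 3 → ℝ)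
    (hgv : ∀ j x, gv j x = ∑ i, Hh i j x •
      (∑ k, (Matrix.of fun p q => dot3 (vpd3 p X x) (vpd3 q X x))⁻¹ i k • vpd3 k X x))
    -- the Cosserat structure: g_α = a_α + ζ D_α, g_3 = d
    (a D : Fin 2 → (Fin 2 → ℝ) → Fin 3 → ℝ) (d : (Fin 2 → ℝ) → Fin 3 → ℝ)
    (hstruct : ∀ x, θof x ∈ ω → x 2 ∈ Ioo (-ht) ht →
      (∀ α : Fin 2, gv α.castSucc x = a α (θof x) + x 2 • D α (θof x)) ∧
      gv 2 x = d (θof x))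
    -- the material connection L^q_{ij} := (Ĥ⁻¹)^{ql} ∂_j Ĥ_{li} and its torsion
    (L : Fin 3 → Fin 3 → Fin 3 → (Fin 3 → ℝ) → ℝ)
    (hL : ∀ q i j x, L q i j x =
      ∑ l, (Matrix.of fun p r => Hh p r x)⁻¹ q l * pd3 j (Hh l i) x)
    (T : Fin 3 → Fin 3 → Fin 3 → (Fin 3 → ℝ) → ℝ)
    (hT : ∀ p i j x, T p i j x = (L p i j x - L p j i x) / 2)
    -- the surface fields H_{iα} and F_{ij}
    (Hf : Fin 3 → Fin 2 → (Fin 2 → ℝ) → ℝ)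
    (hHf1 : ∀ (μ α : Fin 2) θ, Hf μ.castSucc α θ = dot3 (A μ θ) (a α θ))
    (hHf2 : ∀ (α : Fin 2) θ, Hf 2 α θ = dot3 (N θ) (a α θ))
    (F : Fin 3 → Fin 3 → (Fin 2 → ℝ) → ℝ)
    (hF1 : ∀ (μ β : Fin 2) θ, F μ.castSucc β.castSucc θ = dot3 (A μ θ) (D β θ))
    (hF2 : ∀ (β : Fin 2) θ, F 2 β.castSucc θ = dot3 (N θ) (D β θ))
    (hF3 : ∀ (μ : Fin 2) θ, F μ.castSucc 2 θ = dot3 (A μ θ) (d θ))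
    (hF4 : ∀ θ, F 2 2 θ = dot3 (N θ) (d θ)) :
    (∀ θ ∈ ω, ∀ p i j : Fin 3, T p i j (emb θ 0) = 0) ↔
      (∀ θ ∈ ω,
        -- (1) vanishing of the dislocation densities 𝕋_{iαβ}
        (∀ (i : Fin 3) (α β : Fin 2), pd2 β (Hf i α) θ - pd2 α (Hf i β) θ = 0) ∧
        -- (2) vanishing of the measures 𝕋_{μα3}
        (∀ (μ α : Fin 2), pd2 α (F μ.castSucc 2) θ - F μ.castSucc α.castSucc θ
          + (∑ ν, Bup ν μ θ * Hf ν.castSucc α θ) = 0) ∧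
        -- (3) vanishing of the measures 𝕋_{3α3}
        (∀ α : Fin 2, pd2 α (F 2 2) θ - F 2 α.castSucc θ = 0)) := by
  have h0 : (0 : ℝ) ∈ Ioo (-ht) ht := ⟨neg_lt_zero.mpr hht, hht⟩
  have hHh := fun θ (hθ : θ ∈ ω) ζ (hζ : ζ ∈ Ioo (-ht) ht) =>
    Hh_emb_eq hωo hRs hRimm hA hN hX hXdiff hgv hstruct hθ hζ
  have hmidH : ∀ θ ∈ ω, ∀ i α, Hh i α.castSucc (emb θ 0) = Hf i α θ := fun θ hθ i α => by
    induction i using Fin.lastCases with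
    | last => simpa [hHf2, dot3_eq_dotProduct] using (hHh θ hθ 0 h0).2.1 α
    | cast μ => simpa [hHf1, dot3_eq_dotProduct] using (hHh θ hθ 0 h0).1 μ α
  have hmidF : ∀ θ ∈ ω, ∀ i, Hh i 2 (emb θ 0) = F i 2 θ := fun θ hθ i => by
    induction i using Fin.lastCases with
    | last => simpa [hF4, dot3_eq_dotProduct] using (hHh θ hθ 0 h0).2.2.2
    | cast μ => simpa [hF3, dot3_eq_dotProduct] using (hHh θ hθ 0 h0).2.2.1 μ
  simp only [hT, hL]
  refine forall₂_congr fun θ hθ => ?_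
  have hHd : ∀ l i, DifferentiableAt ℝ (Hh l i) (emb θ 0) := fun l i =>
    ((hHs l i).contDiffAt ((isOpen_shell hωo ht).mem_nhds
      ⟨(θof_emb θ 0).symm ▸ hθ, h0⟩)).differentiableAt (by simp)
  have htanH : ∀ i α β, pd3 β.castSucc (Hh i α.castSucc) (emb θ 0) = pd2 β (Hf i α) θ :=
    fun i α β => (pd2_eq_pd3_castSucc (hHd _ _) (eventually_of_mem (hωo.mem_nhds hθ)
      fun θ' hθ' => (hmidH θ' hθ' i α).symm) β).symm
  have htanF : ∀ i α, pd3 α.castSucc (Hh i 2) (emb θ 0) = pd2 α (F i 2) θ :=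
    fun i α => (pd2_eq_pd3_castSucc (hHd _ _) (eventually_of_mem (hωo.mem_nhds hθ)
      fun θ' hθ' => (hmidF θ' hθ' i).symm) α).symm
  have hshell0 : Ioo (-ht) ht ∈ 𝓝 (0 : ℝ) := Ioo_mem_nhds (neg_lt_zero.mpr hht) hht
  have hnorH : ∀ μ α : Fin 2, pd3 2 (Hh μ.castSucc α.castSucc) (emb θ 0) =
      F μ.castSucc α.castSucc θ - ∑ ν, Bup ν μ θ * Hf ν.castSucc α θ := fun μ α => by
    rw [pd3_two_eq_of_hasDerivAt (hHd _ _)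
      ((hasDerivAt_affine_dotProduct _ _ _ _).congr_of_eventuallyEq
        (eventually_of_mem hshell0 fun ζ hζ => (hHh θ hθ ζ hζ).1 μ α)),
      vpd2_normal_eq hωo hRs hRimm hA hN hBf hBup hθ μ]
    simp only [Fin.sum_univ_two, neg_add_rev, add_dotProduct, neg_dotProduct, smul_dotProduct,
      smul_eq_mul, hF1, hHf1, dot3_eq_dotProduct]
    ring
  have hnorN : ∀ α : Fin 2, pd3 2 (Hh 2 α.castSucc) (emb θ 0) = F 2 α.castSucc θ := fun α => by
    have h := hasDerivAt_affine_dotProduct (N θ) 0 (a α θ) (D α θ)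
    simp only [smul_zero, add_zero] at h
    rw [pd3_two_eq_of_hasDerivAt (hHd _ _) (h.congr_of_eventuallyEq
      (eventually_of_mem hshell0 fun ζ hζ => (hHh θ hθ ζ hζ).2.1 α))]
    simp [hF2, dot3_eq_dotProduct]
  rw [sum_inv_mul_skew_eq_zero_iff (hHinv _ ((θof_emb θ 0).symm ▸ hθ) h0)
      fun l i j => pd3 j (Hh l i) (emb θ 0),
    forall_congr' fun l => Fin.forall_symm_iff_castSucc_last fun i j => pd3 j (Hh l i) (emb θ 0),
    forall_and]
  refine and_congr (by simp only [htanH, sub_eq_zero]) ?_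
  rw [Fin.forall_fin_succ']
  simp only [Fin.reduceLast, htanF, hnorH, hnorN]
  refine and_congr (forall₂_congr fun μ α => ?_) (forall_congr' fun α => ?_) <;>
    constructor <;> intro h <;> linarith

/-- Proposition 3.1: the mid-surface torsion of the material connection vanishes if and
only if the 2-d Cosserat inhomogeneity measures vanish simultaneously. -/
theorem stmt5
    (ω : Set (Fin 2 → ℝ)) (hωo : IsOpen ω) (hωb : Bornology.IsBounded ω)
    (hωsc : SimplyConnectedSpace ω)
    (ht : ℝ) (hht : 0 < ht)
    -- mid-surface parametrization, tangents, normal and curvature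
    (R : (Fin 2 → ℝ) → Fin 3 → ℝ)
    (hRs : ContDiffOn ℝ (⊤ : ℕ∞) R ω) (hRinj : Set.InjOn R ω)
    (hRimm : ∀ θ ∈ ω, Function.Injective (fderiv ℝ R θ))
    (A : Fin 2 → (Fin 2 → ℝ) → Fin 3 → ℝ) (hA : ∀ α θ, A α θ = vpd2 α R θ)
    (N : (Fin 2 → ℝ) → Fin 3 → ℝ)
    (hN : ∀ θ, N θ = (norm3 (cross3 (A 0 θ) (A 1 θ)))⁻¹ • cross3 (A 0 θ) (A 1 θ))
    (Bf : Fin 2 → Fin 2 → (Fin 2 → ℝ) → ℝ)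
    (hBf : ∀ α β θ, Bf α β θ = -(dot3 (vpd2 β N θ) (A α θ)))
    -- B^β_α := A^{βγ} B_{αγ}
    (Bup : Fin 2 → Fin 2 → (Fin 2 → ℝ) → ℝ)
    (hBup : ∀ β α θ, Bup β α θ =
      ∑ γ, (Matrix.of fun μ ν : Fin 2 => dot3 (A μ θ) (A ν θ))⁻¹ β γ * Bf α γ θ)
    -- the 3-d parametrization X(θ,ζ) = R(θ) + ζ N(θ), a diffeomorphism onto its image
    (X : (Fin 3 → ℝ) → Fin 3 → ℝ)
    (hX : ∀ x, X x = R (θof x) + x 2 • N (θof x))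
    (hXinj : Set.InjOn X {x | θof x ∈ ω ∧ x 2 ∈ Ioo (-ht) ht})
    (hXdiff : ∀ x, θof x ∈ ω → x 2 ∈ Ioo (-ht) ht → Function.Bijective (fderiv ℝ X x))
    -- the material uniformity field Ĥ, smooth and invertible on Ω
    (Hh : Fin 3 → Fin 3 → (Fin 3 → ℝ) → ℝ)
    (hHs : ∀ i j, ContDiffOn ℝ (⊤ : ℕ∞) (Hh i j) {x | θof x ∈ ω ∧ x 2 ∈ Ioo (-ht) ht})
    (hHinv : ∀ x, θof x ∈ ω → x 2 ∈ Ioo (-ht) ht →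
      (Matrix.of fun i j => Hh i j x).det ≠ 0)
    -- the frame g_j := Ĥ_{ij} G^i, where G^i := G^{ij} G_j and G_i := ∂_i X
    (gv : Fin 3 → (Fin 3 → ℝ) → Fin 3 → ℝ)
    (hgv : ∀ j x, gv j x = ∑ i, Hh i j x •
      (∑ k, (Matrix.of fun p q => dot3 (vpd3 p X x) (vpd3 q X x))⁻¹ i k • vpd3 k X x))
    -- the Cosserat structure: g_α = a_α + ζ D_α, g_3 = d
    (a D : Fin 2 → (Fin 2 → ℝ) → Fin 3 → ℝ) (d : (Fin 2 → ℝ) → Fin 3 → ℝ)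
    (has : ∀ α, ContDiffOn ℝ (⊤ : ℕ∞) (a α) ω)
    (hDs : ∀ α, ContDiffOn ℝ (⊤ : ℕ∞) (D α) ω)
    (hds : ContDiffOn ℝ (⊤ : ℕ∞) d ω)
    (hstruct : ∀ x, θof x ∈ ω → x 2 ∈ Ioo (-ht) ht →
      (∀ α : Fin 2, gv α.castSucc x = a α (θof x) + x 2 • D α (θof x)) ∧
      gv 2 x = d (θof x))
    -- the material connection L^q_{ij} := (Ĥ⁻¹)^{ql} ∂_j Ĥ_{li} and its torsion
    (L : Fin 3 → Fin 3 → Fin 3 → (Fin 3 → ℝ) → ℝ)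
    (hL : ∀ q i j x, L q i j x =
      ∑ l, (Matrix.of fun p r => Hh p r x)⁻¹ q l * pd3 j (Hh l i) x)
    (T : Fin 3 → Fin 3 → Fin 3 → (Fin 3 → ℝ) → ℝ)
    (hT : ∀ p i j x, T p i j x = (L p i j x - L p j i x) / 2)
    -- the surface fields H_{iα} and F_{ij}
    (Hf : Fin 3 → Fin 2 → (Fin 2 → ℝ) → ℝ)
    (hHf1 : ∀ (μ α : Fin 2) θ, Hf μ.castSucc α θ = dot3 (A μ θ) (a α θ))
    (hHf2 : ∀ (α : Fin 2) θ, Hf 2 α θ = dot3 (N θ) (a α θ))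
    (F : Fin 3 → Fin 3 → (Fin 2 → ℝ) → ℝ)
    (hF1 : ∀ (μ β : Fin 2) θ, F μ.castSucc β.castSucc θ = dot3 (A μ θ) (D β θ))
    (hF2 : ∀ (β : Fin 2) θ, F 2 β.castSucc θ = dot3 (N θ) (D β θ))
    (hF3 : ∀ (μ : Fin 2) θ, F μ.castSucc 2 θ = dot3 (A μ θ) (d θ))
    (hF4 : ∀ θ, F 2 2 θ = dot3 (N θ) (d θ)) :
    (∀ θ ∈ ω, ∀ p i j : Fin 3, T p i j (emb θ 0) = 0) ↔
      (∀ θ ∈ ω,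
        -- (1) vanishing of the dislocation densities 𝕋_{iαβ}
        (∀ (i : Fin 3) (α β : Fin 2), pd2 β (Hf i α) θ - pd2 α (Hf i β) θ = 0) ∧
        -- (2) vanishing of the measures 𝕋_{μα3}
        (∀ (μ α : Fin 2), pd2 α (F μ.castSucc 2) θ - F μ.castSucc α.castSucc θ
          + (∑ ν, Bup ν μ θ * Hf ν.castSucc α θ) = 0) ∧
        -- (3) vanishing of the measures 𝕋_{3α3}
        (∀ α : Fin 2, pd2 α (F 2 2) θ - F 2 α.castSucc θ = 0)) :=
  stmt5_general ω hωo ht hht R hRs hRimm A hA N hN Bf hBf Bup hBup X hX hXdiff Hh hHs hHinv gv hgv a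
    D d hstruct L hL T hT Hf hHf1 hHf2 F hF1 hF2 hF3 hF4
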